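/- arXiv:1011.2437 — 5 statements merged into one kernel-verified Lean document; each statement's English description precedes it below -/
import Mathlib

section
/- Let $W_1,\dots,W_M$ be weights with $W_i > 0$ for all $i$, summing to 1, and let $N$ be an integer with $1 \le N < M$. Then there exists a unique $C \in (0,\infty)$ such that $\sum_{i=1}^M \min(1, C W_i) = N$. -/
private lemma dpf_aux (M N : ℕ) (W : Fin M → ℝ) (hpos : ∀ i, 0 < W i) (hNM : N < M)
    (C D : ℝ) (hCD : C < D)
    (hC : ∑ i, min 1 (C * W i) = (N : ℝ)) (hD : ∑ i, min 1 (D * W i) = (N : ℝ)) : False := by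
  have hle : ∀ i ∈ Finset.univ, min 1 (C * W i) ≤ min 1 (D * W i) := by
    intro i _
    exact min_le_min le_rfl (by nlinarith [hpos i])
  have hex : ∃ i, C * W i < 1 := by
    by_contra h
    push_neg at h
    have hall : ∑ i, min 1 (C * W i) = (M : ℝ) := by
      rw [Finset.sum_congr rfl (fun i _ => min_eq_left (h i))]
      simp
    rw [hC] at hall
    have : (N : ℝ) < (M : ℝ) := by exact_mod_cast hNM
    linarith
  obtain ⟨i, hi⟩ := hex
  have hlt : min 1 (C * W i) < min 1 (D * W i) := by
    rw [min_eq_right hi.le]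
    exact lt_min hi (by nlinarith [hpos i])
  have := Finset.sum_lt_sum hle ⟨i, Finset.mem_univ i, hlt⟩
  rw [hC, hD] at this
  exact lt_irrefl _ this

/-- Existence and uniqueness of the threshold `C` in the optimal resampling
equation `∑ i, min 1 (C * W i) = N` of the discrete particle filter, for
positive weights summing to one and `0 < N < M`. -/
theorem dpf_threshold_exists_unique
    (M : ℕ) (W : Fin M → ℝ) (hpos : ∀ i, 0 < W i)
    (hsum : ∑ i, W i = 1) (N : ℕ) (hN : 0 < N) (hNM : N < M) :
    ∃! C : ℝ, 0 < C ∧ ∑ i, min 1 (C * W i) = (N : ℝ) := by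
  have hM : 0 < M := hN.trans hNM
  haveI : NeZero M := ⟨hM.ne'⟩
  have hne : (Finset.univ : Finset (Fin M)).Nonempty := Finset.univ_nonempty
  set m := Finset.univ.inf' hne W with hm
  have hmpos : 0 < m := (Finset.lt_inf'_iff hne).mpr (fun i _ => hpos i)
  set C₀ : ℝ := m⁻¹ with hC0
  have hC0pos : 0 < C₀ := inv_pos.mpr hmpos
  set f : ℝ → ℝ := fun C => ∑ i, min 1 (C * W i) with hf
  have hcont : Continuous f := by
    apply continuous_finset_sum
    intro i _
    exact continuous_const.min (continuous_id.mul continuous_const)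
  have hf0 : f 0 = 0 := by simp [hf]
  have hfC0 : f C₀ = (M : ℝ) := by
    have : ∀ i ∈ Finset.univ, min 1 (C₀ * W i) = 1 := by
      intro i _
      apply min_eq_left
      rw [hC0, inv_mul_eq_div, le_div_iff₀ hmpos, one_mul]
      exact Finset.inf'_le W (Finset.mem_univ i)
    rw [hf]
    simp only []
    rw [Finset.sum_congr rfl this]
    simp
  have hsub := intermediate_value_Icc hC0pos.le hcont.continuousOn
  have hmem : (N : ℝ) ∈ Set.Icc (f 0) (f C₀) := by
    rw [hf0, hfC0]
    constructor
    · positivity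
    · exact_mod_cast hNM.le
  obtain ⟨C, hCmem, hfC⟩ := hsub hmem
  have hCpos : 0 < C := by
    rcases hCmem.1.lt_or_eq with h | h
    · exact h
    · exfalso
      rw [← h, hf0] at hfC
      have : (0 : ℝ) < (N : ℝ) := by exact_mod_cast hN
      linarith
  refine ⟨C, ⟨hCpos, hfC⟩, ?_⟩
  rintro D ⟨hDpos, hfD⟩
  rcases lt_trichotomy D C with h | h | h
  · exact absurd (dpf_aux M N W hpos hNM D C h hfD hfC) not_false
  · exact h
  · exact absurd (dpf_aux M N W hpos hNM C D h hfC hfD) not_false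
end

section
/- In stratified resampling with residual weights: let $p_1,\dots,p_K$ be nonnegative numbers with $\sum_j p_j = n$ for a positive integer $n$ and each $p_j \le 1$. Let $Q_0 = 0$, $Q_i = \sum_{j \le i} p_j$, draw $U_1$ uniformly on $[0,1]$ and set $U_k = U_1 + (k-1)$ for $k = 2,\dots,n$. Declare index $i$ a survivor if there exists $k$ with $Q_{i-1} < U_k \le Q_i$. Then (a) exactly $n$ indices survive almost surely, and (b) the probability that index $i$ survives equals $p_i$. -/
/-!
For `u ∈ (0, 1]` the points `u, u + 1, …, u + n - 1` lie in `(0, n] = (Q₀, Q_K]`, so each falls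
in exactly one cell `(Q_{i-1}, Q_i]`; a cell has length `p_i ≤ 1` while the points are spaced by
`1`, so no cell holds two of them and exactly `n` cells are hit.

For the inclusion probability, cut the cell `(Q_{i-1}, Q_i]` along the unit intervals `(k, k + 1]`
and translate the pieces back into `(0, 1]`. Again because the cell has length at most `1`, the
translates are disjoint, so the set of `u` hitting the cell has measure `p_i`.
-/

open MeasureTheory Set

theorem natCast_eq_of_add_mem_Ioc {a b u : ℝ} {k k' : ℕ} (hab : b ≤ a + 1)
    (hk : u + k ∈ Ioc a b) (hk' : u + k' ∈ Ioc a b) : k = k' := by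
  by_contra hne
  obtain ⟨hk₁, hk₂⟩ := hk
  obtain ⟨hk₁', hk₂'⟩ := hk'
  rcases Nat.lt_or_gt_of_ne hne with h | h
  · have : (k : ℝ) + 1 ≤ k' := by exact_mod_cast h
    linarith
  · have : (k' : ℝ) + 1 ≤ k := by exact_mod_cast h
    linarith

theorem biUnion_range_Ioc_natCast (n : ℕ) :
    ⋃ k ∈ Finset.range n, Ioc (k : ℝ) (k + 1) = Ioc 0 (n : ℝ) := by
  simpa using (Nat.mono_cast (α := ℝ)).biUnion_Ico_Ioc_map_succ 0 n

theorem sum_volume_preimage_add_natCast_inter_Ioc {s : Set ℝ} {n : ℕ} (hs : MeasurableSet s)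
    (hsn : s ⊆ Ioc 0 (n : ℝ)) :
    ∑ k ∈ Finset.range n, volume ((· + (k : ℝ)) ⁻¹' s ∩ Ioc 0 1) = volume s := by
  have hcell (k : ℕ) : (· + (k : ℝ)) ⁻¹' s ∩ Ioc 0 1 = (· + (k : ℝ)) ⁻¹' (s ∩ Ioc k (k + 1)) := by
    simp [preimage_inter]
  have hdisj : (Finset.range n : Set ℕ).PairwiseDisjoint fun k : ℕ => s ∩ Ioc (k : ℝ) (k + 1) := by
    refine fun k _ k' _ hkk' => Disjoint.mono inter_subset_right inter_subset_right ?_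
    simpa using (Nat.mono_cast (α := ℝ)).pairwise_disjoint_on_Ioc_succ hkk'
  calc ∑ k ∈ Finset.range n, volume ((· + (k : ℝ)) ⁻¹' s ∩ Ioc 0 1)
      = ∑ k ∈ Finset.range n, volume (s ∩ Ioc (k : ℝ) (k + 1)) := by
        simp only [hcell, measure_preimage_add_right]
    _ = volume (⋃ k ∈ Finset.range n, s ∩ Ioc (k : ℝ) (k + 1)) :=
        (measure_biUnion_finset hdisj fun _ _ => hs.inter measurableSet_Ioc).symm
    _ = volume s := by
        rw [← inter_iUnion₂, biUnion_range_Ioc_natCast, inter_eq_left.2 hsn]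

theorem volume_restrict_grid_hits_Ioc {a b : ℝ} {n : ℕ} (ha : 0 ≤ a)
    (hbn : b ≤ n) (hab : b ≤ a + 1) :
    volume.restrict (Ioc 0 1) {u : ℝ | ∃ k ∈ Finset.range n, a < u + k ∧ u + k ≤ b}
      = ENNReal.ofReal (b - a) := by
  have hset : {u : ℝ | ∃ k ∈ Finset.range n, a < u + k ∧ u + k ≤ b}
      = ⋃ k ∈ Finset.range n, (· + (k : ℝ)) ⁻¹' Ioc a b := by
    ext u; simp only [mem_iUnion, mem_preimage, mem_Ioc, exists_prop]; rfl
  have hdisj : (Finset.range n : Set ℕ).PairwiseDisjoint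
      fun k : ℕ => (· + (k : ℝ)) ⁻¹' Ioc a b ∩ Ioc 0 1 :=
    fun k _ k' _ hkk' => disjoint_left.2 fun u hu hu' =>
      hkk' (natCast_eq_of_add_mem_Ioc hab hu.1 hu'.1)
  rw [Measure.restrict_apply' measurableSet_Ioc, hset, iUnion₂_inter,
    measure_biUnion_finset hdisj fun _ _ => (measurableSet_Ioc.preimage (by fun_prop)).inter
      measurableSet_Ioc,
    sum_volume_preimage_add_natCast_inter_Ioc measurableSet_Ioc (Ioc_subset_Ioc ha hbn),
    Real.volume_Ioc]

theorem existsUnique_mem_Ioc_of_monotone {Q : ℕ → ℝ} (hQ : Monotone Q) {K : ℕ} {x : ℝ}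
    (hx : x ∈ Ioc (Q 0) (Q K)) : ∃! i : Fin K, x ∈ Ioc (Q i) (Q (i + 1)) := by
  rw [← hQ.biUnion_Ico_Ioc_map_succ] at hx
  simp only [mem_iUnion, mem_Ico, Order.succ_eq_add_one] at hx
  obtain ⟨i, ⟨-, hiK⟩, hxi⟩ := hx
  refine ⟨⟨i, hiK⟩, hxi, fun j hxj => Fin.ext ?_⟩
  by_contra hne
  exact disjoint_left.1 (hQ.pairwise_disjoint_on_Ioc_succ hne) hxj (by simpa using hxi)

theorem card_cells_hit_by_grid {Q : ℕ → ℝ} (hQ : Monotone Q) {K n : ℕ}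
    (hstep : ∀ i : Fin K, Q (i + 1) ≤ Q i + 1) (hQ0 : Q 0 ≤ 0) (hQK : n ≤ Q K) {u : ℝ}
    (hu : u ∈ Ioc 0 1) :
    Nat.card {i : Fin K // ∃ k ∈ Finset.range n, Q i < u + k ∧ u + k ≤ Q (i + 1)} = n := by
  have hpoint (k : Fin n) : u + (k : ℕ) ∈ Ioc (Q 0) (Q K) := by
    have : ((k : ℕ) : ℝ) + 1 ≤ n := by exact_mod_cast k.isLt
    constructor <;> linarith [hu.1, hu.2, ((k : ℕ).cast_nonneg : (0 : ℝ) ≤ (k : ℕ))]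
  choose cell hcell hcell_unique using fun k => existsUnique_mem_Ioc_of_monotone hQ (hpoint k)
  let F (k : Fin n) : {i : Fin K // ∃ k ∈ Finset.range n, Q i < u + k ∧ u + k ≤ Q (i + 1)} :=
    ⟨cell k, k, Finset.mem_range.2 k.isLt, hcell k⟩
  have hF : Function.Bijective F := by
    refine ⟨fun k k' hkk' => Fin.ext ?_, fun ⟨i, k, hk, hik⟩ => ?_⟩
    · have hk' := hcell k'
      rw [← show cell k = cell k' from congrArg Subtype.val hkk'] at hk'
      exact natCast_eq_of_add_mem_Ioc (hstep _) (hcell k) hk'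
    · let k' : Fin n := ⟨k, Finset.mem_range.1 hk⟩
      exact ⟨k', Subtype.ext (hcell_unique k' i hik).symm⟩
  simpa using (Nat.card_eq_of_bijective F hF).symm

section PrefixSum

variable {M : Type*} [AddCommMonoid M] {K : ℕ}

/-- With `Fin K` indexed from `0`, `prefixSum p m` is the paper's `Q_m` and index `i` owns the cell
`(Q_i, Q_{i+1}]`. -/
def prefixSum (p : Fin K → M) (m : ℕ) : M :=
  ∑ j ∈ Finset.univ.filter fun j : Fin K => (j : ℕ) < m, p j

theorem prefixSum_zero (p : Fin K → M) : prefixSum p 0 = 0 := by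
  simp [prefixSum]

theorem prefixSum_self (p : Fin K → M) : prefixSum p K = ∑ j, p j := by
  simp [prefixSum]

theorem prefixSum_succ (p : Fin K → M) (i : Fin K) :
    prefixSum p (i + 1) = prefixSum p i + p i := by
  have : (Finset.univ.filter fun j : Fin K => (j : ℕ) < i + 1)
      = insert i (Finset.univ.filter fun j : Fin K => (j : ℕ) < i) := by
    ext j
    simp [le_iff_eq_or_lt, Fin.val_inj]
  rw [prefixSum, this, Finset.sum_insert (by simp), add_comm, prefixSum]

theorem monotone_prefixSum [PartialOrder M] [IsOrderedAddMonoid M] {p : Fin K → M}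
    (hp : ∀ j, 0 ≤ p j) : Monotone (prefixSum p) := fun _ _ hmm' =>
  Finset.sum_le_sum_of_subset_of_nonneg
    (Finset.monotone_filter_right _ fun _ _ hj => hj.trans_le hmm') fun j _ _ => hp j

end PrefixSum

theorem stratified_resampling_card_and_inclusion_general
    (K n : ℕ) (p : Fin K → ℝ)
    (hp0 : ∀ j, 0 ≤ p j) (hp1 : ∀ j, p j ≤ 1)
    (hsum : ∑ j, p j = (n : ℝ)) :
    (∀ᵐ u ∂(volume.restrict (Set.Icc (0 : ℝ) 1)),
      Nat.card {i : Fin K // ∃ k ∈ Finset.range n,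
        (∑ j ∈ Finset.univ.filter fun j : Fin K => (j : ℕ) < (i : ℕ), p j) < u + k ∧
        u + k ≤ ∑ j ∈ Finset.univ.filter fun j : Fin K => (j : ℕ) < (i : ℕ) + 1, p j} = n) ∧
    ∀ i : Fin K,
      (volume.restrict (Set.Icc (0 : ℝ) 1)) {u : ℝ | ∃ k ∈ Finset.range n,
        (∑ j ∈ Finset.univ.filter fun j : Fin K => (j : ℕ) < (i : ℕ), p j) < u + k ∧
        u + k ≤ ∑ j ∈ Finset.univ.filter fun j : Fin K => (j : ℕ) < (i : ℕ) + 1, p j}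
      = ENNReal.ofReal (p i) := by
  have hQ : Monotone (prefixSum p) := monotone_prefixSum hp0
  have hQK : prefixSum p K = n := (prefixSum_self p).trans hsum
  have hstep (i : Fin K) : prefixSum p (i + 1) ≤ prefixSum p i + 1 := by
    rw [prefixSum_succ]
    linarith [hp1 i]
  rw [← Measure.restrict_congr_set Ioc_ae_eq_Icc]
  refine ⟨(ae_restrict_mem measurableSet_Ioc).mono fun u hu =>
    card_cells_hit_by_grid hQ hstep (prefixSum_zero p).le hQK.ge hu, fun i => ?_⟩
  have hlen : prefixSum p (i + 1) - prefixSum p i = p i := by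
    rw [prefixSum_succ, add_sub_cancel_left]
  have hvol := volume_restrict_grid_hits_Ioc (n := n)
    ((prefixSum_zero p).symm.trans_le (hQ (Nat.zero_le i))) (hQK ▸ hQ i.isLt) (hstep i)
  rw [hlen] at hvol
  exact hvol

/-- Stratified resampling with residual inclusion probabilities `p j ∈ [0,1]`
summing to a positive integer `n`: with `Q` the cumulative sums, `U₁` uniform on
`[0,1]` and `U_k = U₁ + (k-1)`, declaring `i` a survivor when some `U_k` falls
in `(Q_{i-1}, Q_i]`, (a) exactly `n` indices survive almost surely and (b) the
probability that index `i` survives equals `p i`. -/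
theorem stratified_resampling_card_and_inclusion
    (K n : ℕ) (hn : 0 < n) (p : Fin K → ℝ)
    (hp0 : ∀ j, 0 ≤ p j) (hp1 : ∀ j, p j ≤ 1)
    (hsum : ∑ j, p j = (n : ℝ)) :
    (∀ᵐ u ∂(volume.restrict (Set.Icc (0 : ℝ) 1)),
      Nat.card {i : Fin K // ∃ k ∈ Finset.range n,
        (∑ j ∈ Finset.univ.filter fun j : Fin K => (j : ℕ) < (i : ℕ), p j) < u + k ∧
        u + k ≤ ∑ j ∈ Finset.univ.filter fun j : Fin K => (j : ℕ) < (i : ℕ) + 1, p j} = n) ∧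
    ∀ i : Fin K,
      (volume.restrict (Set.Icc (0 : ℝ) 1)) {u : ℝ | ∃ k ∈ Finset.range n,
        (∑ j ∈ Finset.univ.filter fun j : Fin K => (j : ℕ) < (i : ℕ), p j) < u + k ∧
        u + k ≤ ∑ j ∈ Finset.univ.filter fun j : Fin K => (j : ℕ) < (i : ℕ) + 1, p j}
      = ENNReal.ofReal (p i) :=
  stratified_resampling_card_and_inclusion_general K n p hp0 hp1 hsum
end

section
/- The optimal resampling scheme minimizes the expected sum of squared errors $\mathbb{E}[\sum_{i=1}^M (\tilde W_i - W_i)^2]$ over all unbiased resampling schemes selecting at most $N$ particles, where $\tilde W_i$ is the (possibly zero) post-resampling weight of particle $i$: precisely, among all random variables $(\tilde W_1,\dots,\tilde W_M)$ with $\mathbb{E}[\tilde W_i] = W_i$, $\#\{i : \tilde W_i \ne 0\} \le N$ a.s., and $\tilde W_i \in \{0, \beta_i\}$ for deterministic $\beta_i$, the choice $\beta_i = \max(W_i, 1/C)$ with inclusion probability $\min(1, CW_i)$ achieves the minimum. -/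
open MeasureTheory Function

/-! Because `tW i` only takes the values `0` and `β i`, its mean squared error is
`W i * (β i - W i)` and its survival probability is `W i / β i`; counting expected survivors
gives the constraint `∑ i, W i / β i ≤ N`. With `k = C⁻¹` as Lagrange multiplier,
`b ↦ w * b + k ^ 2 * w / b` is minimised over `b ≥ w` at `b = max w k`, and for this choice the
constraint is tight by the definition of `C`, so `∑ i, W i * β i ≥ ∑ i, W i * max (W i) C⁻¹`. -/

section TwoPoint

variable {Ω : Type*} {X : Ω → ℝ} {b w : ℝ}

lemma eq_indicator_of_eq_zero_or_eq (hX : ∀ ω, X ω = 0 ∨ X ω = b) :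
    X = (support X).indicator fun _ => b := by
  ext ω
  by_cases h : X ω = 0
  · simp [h]
  · simpa [h] using (hX ω).resolve_left h

lemma sub_sq_eq_of_eq_zero_or_eq (hX : ∀ ω, X ω = 0 ∨ X ω = b) :
    (fun ω => (X ω - w) ^ 2) = fun ω => (b - 2 * w) * X ω + w ^ 2 := by
  ext ω
  rcases hX ω with h | h <;> rw [h] <;> ring

variable [MeasurableSpace Ω] {μ : Measure Ω}

lemma integral_eq_measureReal_mul_of_eq_zero_or_eq (hXm : Measurable X)
    (hX : ∀ ω, X ω = 0 ∨ X ω = b) : ∫ ω, X ω ∂μ = μ.real (support X) * b := by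
  conv_lhs => rw [eq_indicator_of_eq_zero_or_eq hX]
  rw [integral_indicator_const b (measurableSet_support hXm), smul_eq_mul]

lemma integrable_of_eq_zero_or_eq [IsFiniteMeasure μ] (hXm : Measurable X)
    (hX : ∀ ω, X ω = 0 ∨ X ω = b) : Integrable X μ := by
  rw [eq_indicator_of_eq_zero_or_eq hX]
  exact (integrable_const b).indicator (measurableSet_support hXm)

lemma integrable_sub_sq_of_eq_zero_or_eq [IsFiniteMeasure μ] (hXm : Measurable X)
    (hX : ∀ ω, X ω = 0 ∨ X ω = b) : Integrable (fun ω => (X ω - w) ^ 2) μ := by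
  rw [sub_sq_eq_of_eq_zero_or_eq hX]
  exact ((integrable_of_eq_zero_or_eq hXm hX).const_mul _).add (integrable_const _)

lemma integral_sub_sq_of_eq_zero_or_eq [IsProbabilityMeasure μ] (hXm : Measurable X)
    (hX : ∀ ω, X ω = 0 ∨ X ω = b) (hw : ∫ ω, X ω ∂μ = w) :
    ∫ ω, (X ω - w) ^ 2 ∂μ = w * (b - w) := by
  rw [sub_sq_eq_of_eq_zero_or_eq hX,
    integral_add ((integrable_of_eq_zero_or_eq hXm hX).const_mul _) (integrable_const _),
    integral_const_mul, hw, integral_const, probReal_univ, one_smul]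
  ring

lemma measureReal_support_eq_div_of_eq_zero_or_eq (hXm : Measurable X)
    (hX : ∀ ω, X ω = 0 ∨ X ω = b) (hw : ∫ ω, X ω ∂μ = w) (hw0 : w ≠ 0) :
    μ.real (support X) = w / b := by
  rw [integral_eq_measureReal_mul_of_eq_zero_or_eq hXm hX] at hw
  have hb : b ≠ 0 := by rintro rfl; simp [← hw] at hw0
  rw [← hw, mul_div_cancel_right₀ _ hb]

lemma le_of_integral_eq_of_eq_zero_or_eq [IsProbabilityMeasure μ] (hXm : Measurable X)
    (hX : ∀ ω, X ω = 0 ∨ X ω = b) (hw : ∫ ω, X ω ∂μ = w) (hw0 : 0 < w) : w ≤ b := by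
  rw [integral_eq_measureReal_mul_of_eq_zero_or_eq hXm hX] at hw
  have hp : μ.real (support X) ≤ 1 := measureReal_le_one
  have hb : 0 < b := pos_of_mul_pos_right (hw ▸ hw0) measureReal_nonneg
  nlinarith

end TwoPoint

lemma sum_measureReal_le_of_ae_card_le {Ω ι : Type*} [MeasurableSpace Ω] {μ : Measure Ω}
    [IsProbabilityMeasure μ] [Fintype ι] {A : ι → Set Ω} (hA : ∀ i, MeasurableSet (A i)) {N : ℕ}
    (hN : ∀ᵐ ω ∂μ, Nat.card {i | ω ∈ A i} ≤ N) : ∑ i, μ.real (A i) ≤ N := by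
  classical
  have hcount : ∀ ω, ∑ i, (A i).indicator (fun _ => (1 : ℝ)) ω = Nat.card {i | ω ∈ A i} := by
    intro ω
    simp [Set.indicator_apply, Finset.sum_boole]
  have hint : ∀ i, Integrable ((A i).indicator fun _ => (1 : ℝ)) μ :=
    fun i => (integrable_const 1).indicator (hA i)
  calc ∑ i, μ.real (A i) = ∫ ω, ∑ i, (A i).indicator (fun _ => (1 : ℝ)) ω ∂μ := by
        rw [integral_finsetSum _ fun i _ => hint i]
        simp [integral_indicator_const _ (hA _)]
    _ ≤ ∫ _, (N : ℝ) ∂μ := by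
        refine integral_mono_ae (integrable_finsetSum _ fun i _ => hint i) (integrable_const _) ?_
        filter_upwards [hN] with ω hω
        rw [hcount]
        exact_mod_cast hω
    _ = N := by simp

lemma mul_max_add_sq_mul_div_max_le {w b k : ℝ} (hw : 0 < w) (hk : 0 < k) (hb : w ≤ b) :
    w * max w k + k ^ 2 * (w / max w k) ≤ w * b + k ^ 2 * (w / b) := by
  have hb0 : 0 < b := hw.trans_le hb
  rcases le_total w k with h | h
  · rw [max_eq_right h]
    have : w * b + k ^ 2 * (w / b) - (w * k + k ^ 2 * (w / k)) = w / b * (b - k) ^ 2 := by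
      field_simp; ring
    nlinarith [show 0 ≤ w / b * (b - k) ^ 2 by positivity]
  · rw [max_eq_left h]
    have : w * b + k ^ 2 * (w / b) - (w * w + k ^ 2 * (w / w)) =
        (b - w) * (w * b - k ^ 2) / b := by
      field_simp; ring
    have : 0 ≤ (b - w) * (w * b - k ^ 2) / b :=
      div_nonneg (mul_nonneg (by linarith) (by nlinarith)) hb0.le
    linarith

lemma div_max_inv_eq_min {w C : ℝ} (hw : 0 < w) (hC : 0 < C) : w / max w C⁻¹ = min 1 (C * w) := by
  rcases le_total w C⁻¹ with h | h
  · rw [max_eq_right h, min_eq_right ((le_inv_mul_iff₀ hC).mp (by rwa [mul_one])), div_inv_eq_mul,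
      mul_comm]
  · rw [max_eq_left h, div_self hw.ne', min_eq_left ((inv_le_iff_one_le_mul₀' hC).mp h)]

lemma sum_mul_max_inv_sub_le {ι : Type*} [Fintype ι] {W β : ι → ℝ} {C N : ℝ} (hW : ∀ i, 0 < W i)
    (hC : 0 < C) (hCN : ∑ i, min 1 (C * W i) = N) (hWβ : ∀ i, W i ≤ β i)
    (hβN : ∑ i, W i / β i ≤ N) :
    ∑ i, W i * (max (W i) C⁻¹ - W i) ≤ ∑ i, W i * (β i - W i) := by
  have hkey := Finset.sum_le_sum fun i (_ : i ∈ Finset.univ) =>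
    mul_max_add_sq_mul_div_max_le (hW i) (inv_pos.mpr hC) (hWβ i)
  simp only [Finset.sum_add_distrib, ← Finset.mul_sum] at hkey
  rw [Finset.sum_congr rfl fun i _ => div_max_inv_eq_min (hW i) hC, hCN] at hkey
  have := mul_le_mul_of_nonneg_left hβN (sq_nonneg C⁻¹)
  simp only [mul_sub, Finset.sum_sub_distrib]
  linarith

theorem optimal_resampling_minimizes_variance_general
    {Ω : Type*} [MeasurableSpace Ω] (μ : Measure Ω) [IsProbabilityMeasure μ]
    (M N : ℕ)
    (W : Fin M → ℝ) (hpos : ∀ i, 0 < W i)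
    (C : ℝ) (hC : 0 < C) (heqC : ∑ i, min 1 (C * W i) = (N : ℝ))
    (β : Fin M → ℝ) (tW : Ω → Fin M → ℝ)
    (hmeas : ∀ i, Measurable fun ω => tW ω i)
    (hsupp : ∀ ω i, tW ω i = 0 ∨ tW ω i = β i)
    (hunb : ∀ i, ∫ ω, tW ω i ∂μ = W i)
    (hcard : ∀ᵐ ω ∂μ, Nat.card {i : Fin M | tW ω i ≠ 0} ≤ N) :
    (∑ i, W i * (max (W i) C⁻¹ - W i)) ≤ ∫ ω, ∑ i, (tW ω i - W i) ^ 2 ∂μ ∧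
    ((∀ i, β i = max (W i) C⁻¹) →
      (∀ i, μ {ω | tW ω i ≠ 0} = ENNReal.ofReal (min 1 (C * W i))) →
      ∫ ω, ∑ i, (tW ω i - W i) ^ 2 ∂μ = ∑ i, W i * (max (W i) C⁻¹ - W i)) := by
  have hsupp' : ∀ i ω, tW ω i = 0 ∨ tW ω i = β i := fun i ω => hsupp ω i
  have hvar : ∫ ω, ∑ i, (tW ω i - W i) ^ 2 ∂μ = ∑ i, W i * (β i - W i) := by
    rw [integral_finsetSum _ fun i _ => integrable_sub_sq_of_eq_zero_or_eq (hmeas i) (hsupp' i)]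
    exact Finset.sum_congr rfl fun i _ =>
      integral_sub_sq_of_eq_zero_or_eq (hmeas i) (hsupp' i) (hunb i)
  have hWβ : ∀ i, W i ≤ β i := fun i =>
    le_of_integral_eq_of_eq_zero_or_eq (hmeas i) (hsupp' i) (hunb i) (hpos i)
  have hsurvivors : ∑ i, W i / β i ≤ N := by
    have := sum_measureReal_le_of_ae_card_le (fun i => measurableSet_support (hmeas i)) hcard
    rwa [Finset.sum_congr rfl fun i _ => measureReal_support_eq_div_of_eq_zero_or_eq
      (hmeas i) (hsupp' i) (hunb i) (hpos i).ne'] at this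
  refine ⟨hvar ▸ sum_mul_max_inv_sub_le hpos hC heqC hWβ hsurvivors, fun hβ _ => ?_⟩
  simp only [hvar, hβ]

/-- Fearnhead–Clifford optimality of the resampling step: among all unbiased
resampling schemes keeping at most `N` particles, in which the random
post-resampling weight of particle `i` takes the two values `{0, β i}`, the
expected sum of squared weight errors is at least
`∑ i, W i * (max (W i) C⁻¹ - W i)`, where `C` solves `∑ i, min 1 (C W i) = N`;
moreover the scheme with `β i = max (W i) C⁻¹` and inclusion probability
`min 1 (C * W i)` achieves this minimum. -/
theorem optimal_resampling_minimizes_variance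
    {Ω : Type*} [MeasurableSpace Ω] (μ : Measure Ω) [IsProbabilityMeasure μ]
    (M N : ℕ) (hN : 0 < N) (hNM : N < M)
    (W : Fin M → ℝ) (hpos : ∀ i, 0 < W i) (hsum : ∑ i, W i = 1)
    (C : ℝ) (hC : 0 < C) (heqC : ∑ i, min 1 (C * W i) = (N : ℝ))
    (β : Fin M → ℝ) (tW : Ω → Fin M → ℝ)
    (hmeas : ∀ i, Measurable fun ω => tW ω i)
    (hsupp : ∀ ω i, tW ω i = 0 ∨ tW ω i = β i)
    (hunb : ∀ i, ∫ ω, tW ω i ∂μ = W i)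
    (hcard : ∀ᵐ ω ∂μ, Nat.card {i : Fin M | tW ω i ≠ 0} ≤ N) :
    (∑ i, W i * (max (W i) C⁻¹ - W i)) ≤ ∫ ω, ∑ i, (tW ω i - W i) ^ 2 ∂μ ∧
    ((∀ i, β i = max (W i) C⁻¹) →
      (∀ i, μ {ω | tW ω i ≠ 0} = ENNReal.ofReal (min 1 (C * W i))) →
      ∫ ω, ∑ i, (tW ω i - W i) ^ 2 ∂μ = ∑ i, W i * (max (W i) C⁻¹ - W i)) :=
  optimal_resampling_minimizes_variance_general μ M N W hpos C hC heqC β tW hmeas hsupp hunb hcard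
end

section
/- The extended target density $\pi^N(\theta, x_{1:T}, \mathbf{s}_1,\dots,\mathbf{s}_T) = p(\theta, x_{1:T} \mid y_{1:T}) \left\{\prod_{n=2}^T \mathbb{I}[x_{1:n} \in \mathbf{s}_n]\right\} \frac{\psi_\theta^N(\mathbf{s}_1,\dots,\mathbf{s}_T)}{\prod_{n=2}^T r_n^N(x_{1:n} \in \mathbf{s}_n \mid \mathbf{w}_{n-1}^\theta)}$ admits $p(\theta, x_{1:T} \mid y_{1:T})$ as its marginal: summing $\pi^N$ over all support sets $\mathbf{s}_1,\dots,\mathbf{s}_T$ yields $p(\theta, x_{1:T} \mid y_{1:T})$. -/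
/-!
For fixed `(θ, x)` the extended target is `p(θ, x)` times a product of one factor per time
step, `𝟙[x_{1:n} ∈ s_n] / r_n(x_{1:n} ∈ s_n) · r_n(s_n)` (just `r_1(s_1)` at the first step),
which depends only on `s_1, …, s_n` and sums to one over `s_n` for fixed earlier supports. Summing out `s_T, s_{T-1}, …, s_1` in turn
therefore leaves `p(θ, x)`.
-/

open Finset

/-- The prefix `x_{1:n+1}` of a trajectory `x_{1:T}`, for `n : Fin T`. -/
def dpfPrefix {X : Type*} {T : ℕ} (x : Fin T → X) (n : Fin T) :
    Fin (n.1 + 1) → X :=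
  fun i => x ⟨i.1, by have h1 := i.2; have h2 := n.2; omega⟩

theorem sum_pi_prod_eq_one_of_adapted {T : ℕ} {β : Fin T → Type*}
    [∀ n, Fintype (β n)] [∀ n, Nonempty (β n)] [∀ n, DecidableEq (β n)]
    (F : (n : Fin T) → ((m : Fin T) → β m) → ℝ)
    (hF_adapted : ∀ n s s', (∀ m ≤ n, s m = s' m) → F n s = F n s')
    (hF_sum : ∀ n s, ∑ t : β n, F n (Function.update s n t) = 1) :
    ∑ s : (m : Fin T) → β m, ∏ n, F n s = 1 := by
  induction T with
  | zero => simp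
  | succ T ih =>
    let r₀ : (i : Fin T) → β i.succ := fun _ => Classical.arbitrary _
    have head : ∀ a r, F 0 (Fin.cons a r) = F 0 (Fin.cons a r₀) := fun a r =>
      hF_adapted 0 _ _ fun m hm => by rw [Fin.le_zero_iff.mp hm]; rfl
    have tail (a : β 0) :
        ∑ r : (i : Fin T) → β i.succ, ∏ i : Fin T, F i.succ (Fin.cons a r) = 1 := by
      refine ih (fun (i : Fin T) r => F i.succ (Fin.cons a r))
        (fun n r r' h => ?_) fun n r => ?_
      · refine hF_adapted _ _ _ fun m hm => ?_
        induction m using Fin.cases with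
        | zero => rfl
        | succ m => exact h m (Fin.succ_le_succ_iff.mp hm)
      · simpa only [Fin.cons_update] using hF_sum n.succ (Fin.cons a r)
    calc ∑ s : (m : Fin (T + 1)) → β m, ∏ n, F n s
        = ∑ a, ∑ r : (i : Fin T) → β i.succ,
            F 0 (Fin.cons a r) * ∏ i : Fin T, F i.succ (Fin.cons a r) := by
          rw [← (Fin.consEquiv β).sum_comp, Fintype.sum_prod_type]
          simp only [Fin.prod_univ_succ]; rfl
      _ = ∑ a, F 0 (Fin.cons a r₀) := by simp only [head, ← mul_sum, tail, mul_one]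
      _ = 1 := by
          simpa only [Fin.update_cons_zero] using hF_sum 0 (Fin.cons (Classical.arbitrary _) r₀)

theorem sum_boole_div_sum_filter_mul_eq_one {ι : Type*} [Fintype ι] (P : ι → Prop)
    [DecidablePred P] (w : ι → ℝ) (hw : ∑ t ∈ univ.filter P, w t ≠ 0) :
    ∑ t, (if P t then (1 : ℝ) else 0) / (∑ t' ∈ univ.filter P, w t') * w t = 1 := by
  simp only [div_mul_eq_mul_div, ← sum_div, ite_mul, one_mul, zero_mul, ← sum_filter]
  exact div_self hw

theorem extended_target_marginal_general
    (X : Type*) [Fintype X] [DecidableEq X] (T : ℕ) (Θ : Type*)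
    (p : Θ → (Fin T → X) → ℝ)
    (R : Θ → (n : Fin T) → ((m : Fin T) → Finset (Fin (m.1 + 1) → X)) →
      Finset (Fin (n.1 + 1) → X) → ℝ)
    (hRdep : ∀ θ (n : Fin T) s s', (∀ m : Fin T, m < n → s m = s' m) →
      R θ n s = R θ n s')
    (hRprob : ∀ θ (n : Fin T) s,
      ∑ t : Finset (Fin (n.1 + 1) → X), R θ n s t = 1)
    (hpos : ∀ θ (x : Fin T → X), p θ x ≠ 0 → ∀ (n : Fin T) s,
      0 < ∑ t ∈ Finset.univ.filter
            (fun t : Finset (Fin (n.1 + 1) → X) => dpfPrefix x n ∈ t),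
          R θ n s t) :
    ∀ θ (x : Fin T → X),
      (∑ s : (m : Fin T) → Finset (Fin (m.1 + 1) → X),
        p θ x *
        (∏ n ∈ Finset.univ.filter fun n : Fin T => 1 ≤ n.1,
          (if dpfPrefix x n ∈ s n then (1 : ℝ) else 0) /
            ∑ t ∈ Finset.univ.filter
                (fun t : Finset (Fin (n.1 + 1) → X) => dpfPrefix x n ∈ t),
              R θ n s t) *
        ∏ n : Fin T, R θ n s (s n))
      = p θ x := by
  intro θ x
  by_cases hp : p θ x = 0
  · simp [hp]
  let F (n : Fin T) (s : (m : Fin T) → Finset (Fin (m.1 + 1) → X)) : ℝ :=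
    (if 1 ≤ n.1 then
      (if dpfPrefix x n ∈ s n then 1 else 0) /
        ∑ t ∈ univ.filter (fun t => dpfPrefix x n ∈ t), R θ n s t
    else 1) * R θ n s (s n)
  have hF_adapted : ∀ n s s', (∀ m ≤ n, s m = s' m) → F n s = F n s' := fun n s s' h => by
    simp only [F, hRdep θ n s s' fun m hm => h m hm.le, h n le_rfl]
  have hF_sum : ∀ n s, ∑ t, F n (Function.update s n t) = 1 := by
    intro n s
    have hR : ∀ t, R θ n (Function.update s n t) = R θ n s := fun t =>
      hRdep θ n _ _ fun m hm => Function.update_of_ne hm.ne _ _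
    simp only [F, hR, Function.update_self]
    split_ifs
    · exact sum_boole_div_sum_filter_mul_eq_one _ _ (hpos θ x hp n s).ne'
    · simpa only [one_mul] using hRprob θ n s
  calc _ = p θ x * ∑ s, ∏ n, F n s := by
        rw [mul_sum]
        refine sum_congr rfl fun s _ => ?_
        rw [mul_assoc, prod_filter, ← prod_mul_distrib]
    _ = p θ x := by rw [sum_pi_prod_eq_one_of_adapted F hF_adapted hF_sum, mul_one]

/-- The extended target density of discrete PMCMC admits the posterior as a
marginal: with `p` the posterior density on `Θ × 𝒳^T`, `R θ n s` the
conditional law of the `n`-th random support set given the weights (which are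
deterministic functions of the earlier support sets, so `R θ n` depends only on
the supports at times `< n`), and the marginal inclusion probability
`∑_{t ∋ x_{1:n}} R θ n s t` strictly positive on the support of `p`, summing
the extended target
`π^N(θ, x, s₁,…,s_T) = p(θ,x) ∏_{n≥2} 𝟙[x_{1:n} ∈ s_n] / r_n^N(x_{1:n} ∈ s_n | w_{n-1}) ⬝ ψ^N_θ(s₁,…,s_T)`
over all support sequences yields `p(θ, x)`. -/
theorem extended_target_marginal
    (X : Type*) [Fintype X] [DecidableEq X] (T : ℕ) (Θ : Type*)
    (p : Θ → (Fin T → X) → ℝ)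
    (R : Θ → (n : Fin T) → ((m : Fin T) → Finset (Fin (m.1 + 1) → X)) →
      Finset (Fin (n.1 + 1) → X) → ℝ)
    (hRdep : ∀ θ (n : Fin T) s s', (∀ m : Fin T, m < n → s m = s' m) →
      R θ n s = R θ n s')
    (hRnonneg : ∀ θ n s t, 0 ≤ R θ n s t)
    (hRprob : ∀ θ (n : Fin T) s,
      ∑ t : Finset (Fin (n.1 + 1) → X), R θ n s t = 1)
    (hpos : ∀ θ (x : Fin T → X), p θ x ≠ 0 → ∀ (n : Fin T) s,
      0 < ∑ t ∈ Finset.univ.filter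
            (fun t : Finset (Fin (n.1 + 1) → X) => dpfPrefix x n ∈ t),
          R θ n s t) :
    ∀ θ (x : Fin T → X),
      (∑ s : (m : Fin T) → Finset (Fin (m.1 + 1) → X),
        p θ x *
        (∏ n ∈ Finset.univ.filter fun n : Fin T => 1 ≤ n.1,
          (if dpfPrefix x n ∈ s n then (1 : ℝ) else 0) /
            ∑ t ∈ Finset.univ.filter
                (fun t : Finset (Fin (n.1 + 1) → X) => dpfPrefix x n ∈ t),
              R θ n s t) *
        ∏ n : Fin T, R θ n s (s n))
      = p θ x :=
  extended_target_marginal_general X T Θ p R hRdep hRprob hpos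
end

section
/- If $(X_{1:T}, \mathbf{S}_1,\dots,\mathbf{S}_T)$ is distributed according to the conditional extended target $\pi_\theta^N(\cdot)$, then the trajectory $X'_{1:T}$ obtained at any step of the backward sampling procedure (sampling $X'_{n+1:T}$ from the final weights, then successively redrawing the prefix $X'_{1:n}$ from the backward weights $V_n^\theta(x_{1:n} | x'_{n+1:T}) \propto W_n^\theta(x_{1:n}) p_\theta(x'_{n+1:T}|x_{1:n}) p_\theta(y_{n+1:T}|y_{1:n}, x_{1:n}, x'_{n+1:T})$) is exactly distributed according to the posterior $p_\theta(x_{1:T} | y_{1:T})$. -/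
/-! Each backward step at time `n` keeps the suffix `x_{n+1:T}` and the support sets `s_{1:n}`
and redraws the prefix `x_{1:n}` from its exact conditional under `π` given them. Hence, if the
current law agrees with `π` on the joint marginal of `(x, s_{1:n})`, so does the law after the
step. By induction, after `j` steps the law agrees with `π` at level `T - j`, and summing out the
remaining support sets gives the trajectory marginal `p`. -/

open Finset

/-- Sequences of support sets `s_1 ⊆ 𝒳, s_2 ⊆ 𝒳², …, s_T ⊆ 𝒳^T`. -/
abbrev DSupp (X : Type*) (T : ℕ) := (m : Fin T) → Finset (Fin (m.1 + 1) → X)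

variable {X : Type*} [Fintype X] [DecidableEq X] {T : ℕ}

/-- Replace the first `n` coordinates of a trajectory by a given prefix. -/
def combineT (n : ℕ) (xp : Fin n → X) (x : Fin T → X) : Fin T → X :=
  fun i => if h : i.1 < n then xp ⟨i.1, h⟩ else x i

/-- The prefix `x_{1:n}` of a trajectory. -/
def prefT (hT : 0 < T) (x : Fin T → X) (n : ℕ) : Fin n → X :=
  fun i => x ⟨min i.1 (T - 1), by omega⟩

/-- Marginal of the extended target over the support sets at times `> n`,
i.e. the joint mass of `(x, s_1, …, s_n)`. -/
def piPre (π : (Fin T → X) → DSupp X T → ℝ) (n : ℕ)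
    (x : Fin T → X) (s : DSupp X T) : ℝ :=
  ∑ s' ∈ Finset.univ.filter
      (fun s' : DSupp X T => ∀ m : Fin T, m.1 < n → s' m = s m),
    π x s'

/-- Normalized backward sampling weight at time `n`: the conditional
probability, under the extended target, of the prefix `x_{1:n}` given the
suffix `x_{n+1:T}` and the support sets `s_1, …, s_n`. -/
noncomputable def bwV (π : (Fin T → X) → DSupp X T → ℝ) (n : ℕ)
    (x : Fin T → X) (s : DSupp X T) (xp : Fin n → X) : ℝ :=
  piPre π n (combineT n xp x) s /
    ∑ xp' : Fin n → X, piPre π n (combineT n xp' x) s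

/-- One backward sampling step at time `n`: redraw the prefix `x_{1:n}` from
the normalized backward weights, keeping the suffix and support sets. -/
noncomputable def bwStep (π : (Fin T → X) → DSupp X T → ℝ) (hT : 0 < T)
    (n : ℕ) (d : (Fin T → X) → DSupp X T → ℝ) :
    (Fin T → X) → DSupp X T → ℝ :=
  fun x s => (∑ xp' : Fin n → X, d (combineT n xp' x) s) *
    bwV π n x s (prefT hT x n)

/-- The law of (trajectory, support sets) after the initial draw from the final
weights (which leaves the extended target `π` invariant) followed by `j`
backward sampling steps at times `T-1, T-2, …`. -/
noncomputable def bwSeq (π : (Fin T → X) → DSupp X T → ℝ) (hT : 0 < T) :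
    ℕ → (Fin T → X) → DSupp X T → ℝ
  | 0 => π
  | j + 1 => bwStep π hT (T - 1 - j) (bwSeq π hT j)

theorem mul_div_sum_self_of_nonneg {ι : Type*} [Fintype ι] {f : ι → ℝ}
    (hf : ∀ i, 0 ≤ f i) (i : ι) : (∑ j, f j) * (f i / ∑ j, f j) = f i := by
  by_cases h : ∑ j, f j = 0
  · rw [h, zero_mul, congrFun ((Fintype.sum_eq_zero_iff_of_nonneg hf).1 h) i, Pi.zero_apply]
  · exact mul_div_cancel₀ _ h

theorem combineT_prefT {α : Type*} (hT : 0 < T) (n : ℕ) (x : Fin T → α) :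
    combineT n (prefT hT x n) x = x := by
  funext i
  unfold combineT prefT
  split_ifs
  · congr 1; ext; simp only; omega
  · rfl

def agreeBelow (n : ℕ) (s : DSupp X T) : Finset (DSupp X T) :=
  univ.filter fun s' => ∀ m : Fin T, m.1 < n → s' m = s m

theorem mem_agreeBelow {n : ℕ} {s s' : DSupp X T} :
    s' ∈ agreeBelow n s ↔ ∀ m : Fin T, m.1 < n → s' m = s m := by
  simp [agreeBelow]

theorem piPre_eq_sum_agreeBelow (d : (Fin T → X) → DSupp X T → ℝ) (n : ℕ)
    (x : Fin T → X) (s : DSupp X T) : piPre d n x s = ∑ s' ∈ agreeBelow n s, d x s' :=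
  rfl

theorem agreeBelow_eq_of_mem {n : ℕ} {s s' : DSupp X T} (h : s' ∈ agreeBelow n s) :
    agreeBelow n s' = agreeBelow n s := by
  ext s''
  simp only [mem_agreeBelow] at h ⊢
  exact forall₂_congr fun m hm => by rw [h m hm]

theorem piPre_congr_of_mem (d : (Fin T → X) → DSupp X T → ℝ) {n : ℕ} {s s' : DSupp X T}
    (h : s' ∈ agreeBelow n s) (x : Fin T → X) : piPre d n x s' = piPre d n x s := by
  simp only [piPre_eq_sum_agreeBelow, agreeBelow_eq_of_mem h]

theorem bwV_congr_of_mem (π : (Fin T → X) → DSupp X T → ℝ) {n : ℕ} {s s' : DSupp X T}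
    (h : s' ∈ agreeBelow n s) (x : Fin T → X) (xp : Fin n → X) :
    bwV π n x s' xp = bwV π n x s xp := by
  simp only [bwV, piPre_congr_of_mem π h]

theorem filter_agreeBelow_apply_eq {n : ℕ} (hn : n < T) (s : DSupp X T)
    (t : Finset (Fin (n + 1) → X)) :
    (agreeBelow n s).filter (fun s' => s' ⟨n, hn⟩ = t) =
      agreeBelow (n + 1) (Function.update s ⟨n, hn⟩ t) := by
  ext s'
  simp only [mem_filter, mem_agreeBelow]
  constructor
  · rintro ⟨hlt, heq⟩ m hm
    rcases (Nat.lt_succ_iff_lt_or_eq.mp hm) with hm | hm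
    · rw [Function.update_of_ne (ne_of_lt (show m < ⟨n, hn⟩ from hm)), hlt m hm]
    · obtain rfl : m = ⟨n, hn⟩ := Fin.ext hm
      rw [heq, Function.update_self]
  · intro h
    refine ⟨fun m hm => ?_, by simpa using h ⟨n, hn⟩ n.lt_succ_self⟩
    simpa [Function.update_of_ne (ne_of_lt (show m < ⟨n, hn⟩ from hm))] using
      h m (Nat.lt_succ_of_lt hm)

theorem piPre_eq_sum_update (d : (Fin T → X) → DSupp X T → ℝ) {n : ℕ} (hn : n < T)
    (x : Fin T → X) (s : DSupp X T) :
    piPre d n x s = ∑ t, piPre d (n + 1) x (Function.update s ⟨n, hn⟩ t) := by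
  rw [piPre_eq_sum_agreeBelow, ← sum_fiberwise (agreeBelow n s) (fun s' => s' ⟨n, hn⟩)]
  simp only [filter_agreeBelow_apply_eq, piPre_eq_sum_agreeBelow]

theorem piPre_eq_of_le {d e : (Fin T → X) → DSupp X T → ℝ} {k n : ℕ} (hn : n ≤ T)
    (hkn : k ≤ n) (h : piPre d n = piPre e n) : piPre d k = piPre e k := by
  induction hkn using Nat.decreasingInduction with
  | self => exact h
  | of_succ k hk ih =>
    funext x s
    simp only [piPre_eq_sum_update _ (hk.trans_le hn), ih]

theorem piPre_zero (d : (Fin T → X) → DSupp X T → ℝ) (x : Fin T → X) (s : DSupp X T) :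
    piPre d 0 x s = ∑ s', d x s' := by
  rw [piPre_eq_sum_agreeBelow]
  congr 1
  ext s'
  simp [mem_agreeBelow]

theorem piPre_nonneg {π : (Fin T → X) → DSupp X T → ℝ} (hπ : ∀ x s, 0 ≤ π x s) (n : ℕ)
    (x : Fin T → X) (s : DSupp X T) : 0 ≤ piPre π n x s :=
  sum_nonneg fun s' _ => hπ x s'

theorem piPre_bwStep (π d : (Fin T → X) → DSupp X T → ℝ) (hT : 0 < T) (n : ℕ)
    (x : Fin T → X) (s : DSupp X T) :
    piPre (bwStep π hT n d) n x s =
      (∑ xp, piPre d n (combineT n xp x) s) * bwV π n x s (prefT hT x n) := by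
  calc piPre (bwStep π hT n d) n x s
      = ∑ s' ∈ agreeBelow n s, (∑ xp, d (combineT n xp x) s') * bwV π n x s (prefT hT x n) :=
        sum_congr rfl fun s' hs' => by rw [bwStep, bwV_congr_of_mem π hs']
    _ = (∑ xp, piPre d n (combineT n xp x) s) * bwV π n x s (prefT hT x n) := by
        rw [← sum_mul, sum_comm]
        rfl

theorem sum_piPre_combineT_mul_bwV {π : (Fin T → X) → DSupp X T → ℝ}
    (hπ : ∀ x s, 0 ≤ π x s) (hT : 0 < T) (n : ℕ) (x : Fin T → X) (s : DSupp X T) :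
    (∑ xp, piPre π n (combineT n xp x) s) * bwV π n x s (prefT hT x n) = piPre π n x s := by
  have h := mul_div_sum_self_of_nonneg (f := fun xp => piPre π n (combineT n xp x) s)
    (fun _ => piPre_nonneg hπ n _ s) (prefT hT x n)
  simpa only [bwV, combineT_prefT] using h

theorem piPre_bwStep_eq {π d : (Fin T → X) → DSupp X T → ℝ} (hπ : ∀ x s, 0 ≤ π x s)
    (hT : 0 < T) {n : ℕ} (h : piPre d n = piPre π n) :
    piPre (bwStep π hT n d) n = piPre π n := by
  funext x s
  rw [piPre_bwStep, h, sum_piPre_combineT_mul_bwV hπ]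

theorem piPre_bwSeq {π : (Fin T → X) → DSupp X T → ℝ} (hπ : ∀ x s, 0 ≤ π x s)
    (hT : 0 < T) (j : ℕ) : piPre (bwSeq π hT j) (T - j) = piPre π (T - j) := by
  -- once `j ≥ T` the subtractions truncate to `0`, where a step redraws the empty prefix
  induction j with
  | zero => rfl
  | succ j ih =>
    rw [show T - (j + 1) = T - 1 - j by omega]
    exact piPre_bwStep_eq hπ hT (piPre_eq_of_le (Nat.sub_le T j) (by omega) ih)

theorem backward_sampling_exact_general
    (X : Type*) [Fintype X] [DecidableEq X] (T : ℕ) (hT : 0 < T)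
    (π : (Fin T → X) → DSupp X T → ℝ)
    (hπ0 : ∀ x s, 0 ≤ π x s)
    (p : (Fin T → X) → ℝ)
    (hmarg : ∀ x, ∑ s : DSupp X T, π x s = p x) :
    ∀ j, j ≤ T - 1 → ∀ x, ∑ s : DSupp X T, bwSeq π hT j x s = p x := by
  intro j _ x
  have h := congrFun (congrFun (piPre_eq_of_le (Nat.sub_le T j) (Nat.zero_le _)
    (piPre_bwSeq hπ0 hT j)) x) (fun _ => ∅)
  rw [piPre_zero, piPre_zero] at h
  rw [h, hmarg]

/-- Proposition 1: if `(X_{1:T}, S_1, …, S_T)` is distributed according to the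
extended target `π_θ^N` (whose trajectory marginal is the posterior
`p_θ(x_{1:T}|y_{1:T})`), then the trajectory obtained at **any** step of the
backward sampling procedure is distributed exactly according to the posterior:
after the initial draw from the final weights and after each backward
redrawing of the prefix from the backward weights, the trajectory marginal of
the current law equals `p`. -/
theorem backward_sampling_exact
    (X : Type*) [Fintype X] [DecidableEq X] (T : ℕ) (hT : 0 < T)
    (π : (Fin T → X) → DSupp X T → ℝ)
    (hπ0 : ∀ x s, 0 ≤ π x s)
    (hπ1 : ∑ x : Fin T → X, ∑ s : DSupp X T, π x s = 1)
    (p : (Fin T → X) → ℝ)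
    (hmarg : ∀ x, ∑ s : DSupp X T, π x s = p x) :
    ∀ j, j ≤ T - 1 → ∀ x, ∑ s : DSupp X T, bwSeq π hT j x s = p x :=
  backward_sampling_exact_general X T hT π hπ0 p hmarg
end
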